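/- Let X be a type and Z ⊆ X a subset, and let n be a natural number. Then there is a Σn-equivariant bijection between (Fin n → X), with Σn acting by (σ • w) = w ∘ σ⁻¹, and the disjoint union over all pairs (i, j) with i + j = n of the induced Σn-sets Ind_{Σi×Σj}^{Σn}((Fin i → X \ Z) × (Fin j → Z)), where Σi × Σj acts blockwise on (Fin i → X \ Z) × (Fin j → Z). The bijection sends the class of (σ, (u, v)) in the (i, j)-summand to σ • (concatenation of u and v via Fin i ⊕ Fin j ≅ Fin n). -/

import Mathlib

/-! The number `j` of coordinates lying in `Z` is invariant under `Σn`, and every tuple with `j`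
such coordinates is a permutation of a concatenation `(u, v)`, `u` listing the coordinates outside
`Z` and `v` those inside. Two pairs `(σ, (u, v))`, `(τ, (u', v'))` with the same image differ by
`σ⁻¹τ`, which sends coordinates outside `Z` to coordinates outside `Z`; it therefore preserves the
two blocks, i.e. lies in `Σi × Σj`, which is exactly the relation defining the induced set. -/

open Equiv

namespace Stmt1

/-- The standard equivalence `Fin i ⊕ Fin j ≃ Fin n` for `i + j = n`. -/
def finAdd {i j n : ℕ} (h : i + j = n) : Fin i ⊕ Fin j ≃ Fin n :=
  finSumFinEquiv.trans (finCongr h)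

/-- The block embedding `Σi × Σj → Σn`: the first factor permutes the first `i`
elements, the second the last `j`. -/
def blockEmb {i j n : ℕ} (h : i + j = n) (p : Perm (Fin i) × Perm (Fin j)) :
    Perm (Fin n) :=
  (finAdd h).permCongr (Equiv.sumCongr p.1 p.2)

/-- The relation `(g, x) ~ (g·φ(h), h⁻¹ • x)` defining the induced `G`-set. -/
def IndRel {G H P : Type*} [Group G] [Group H] (φ : H → G) (act : H → P → P) :
    G × P → G × P → Prop :=
  fun a b => ∃ h : H, b = (a.1 * φ h, act h⁻¹ a.2)

/-- The induced `G`-set `Ind_H^G P`, a quotient of `G × P`. -/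
def Ind {G H P : Type*} [Group G] [Group H] (φ : H → G) (act : H → P → P) : Type _ :=
  Quot (IndRel φ act)

/-- Class of a pair `(g, x)` in the induced `G`-set. -/
def Ind.mk {G H P : Type*} [Group G] [Group H] (φ : H → G) (act : H → P → P)
    (a : G × P) : Ind φ act :=
  Quot.mk _ a

/-- The `G`-action on `Ind_H^G P`, by left multiplication on the first coordinate. -/
def Ind.smul {G H P : Type*} [Group G] [Group H] {φ : H → G} {act : H → P → P}
    (g : G) : Ind φ act → Ind φ act :=
  Quot.map (fun a => (g * a.1, a.2))
    (by
      rintro ⟨g1, x1⟩ ⟨g2, x2⟩ ⟨h, heq⟩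
      refine ⟨h, ?_⟩
      simp only [Prod.ext_iff] at heq ⊢
      exact ⟨by rw [heq.1, mul_assoc], heq.2⟩)

variable {X : Type} (Z : Set X)

/-- The action of `Σn` on `Fin n → X` by `(σ • w) = w ∘ σ⁻¹`. -/
def permSmul {X : Type} {n : ℕ} (σ : Perm (Fin n)) (w : Fin n → X) : Fin n → X :=
  fun k => w (σ⁻¹ k)

/-- `W`: the tuples for which the number of coordinates lying in `Z` is exactly `j`. -/
def Wset (j n : ℕ) : Set (Fin n → X) :=
  {w | Nat.card {k : Fin n // w k ∈ Z} = j}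

/-- `W` is invariant under the `Σn`-action, so the action restricts to `W`. -/
def WAct {j n : ℕ} (σ : Perm (Fin n)) (w : Wset Z j n) : Wset Z j n :=
  ⟨permSmul σ w.1, by
    have hw := w.2
    simp only [Wset, Set.mem_setOf_eq] at hw ⊢
    exact (Nat.card_congr (Equiv.subtypeEquiv (σ⁻¹ : Perm (Fin n)) fun a => Iff.rfl)).trans hw⟩

/-- The blockwise action of `Σi × Σj` on `(Fin i → X \ Z) × (Fin j → Z)`. -/
def sourceAct {i j : ℕ} (p : Perm (Fin i) × Perm (Fin j))
    (x : (Fin i → ↥(Zᶜ)) × (Fin j → ↥Z)) : (Fin i → ↥(Zᶜ)) × (Fin j → ↥Z) :=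
  (fun a => x.1 (p.1⁻¹ a), fun b => x.2 (p.2⁻¹ b))

/-- The concatenation of a tuple in `X \ Z` and a tuple in `Z`, via `Fin i ⊕ Fin j ≃ Fin n`. -/
def concat {i j n : ℕ} (h : i + j = n) (x : (Fin i → ↥(Zᶜ)) × (Fin j → ↥Z)) :
    Fin n → X :=
  fun k => Sum.elim (fun a => (x.1 a : X)) (fun b => (x.2 b : X)) ((finAdd h).symm k)

lemma concat_mem {i j n : ℕ} (h : i + j = n) (x : (Fin i → ↥(Zᶜ)) × (Fin j → ↥Z)) :
    concat Z h x ∈ Wset Z j n := by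
  simp only [Wset, Set.mem_setOf_eq]
  have e1 : {k : Fin n // concat Z h x k ∈ Z} ≃
      {s : Fin i ⊕ Fin j // Sum.elim (fun a => (x.1 a : X)) (fun b => (x.2 b : X)) s ∈ Z} :=
    Equiv.subtypeEquiv (finAdd h).symm fun k => Iff.rfl
  have e2 : {s : Fin i ⊕ Fin j //
      Sum.elim (fun a => (x.1 a : X)) (fun b => (x.2 b : X)) s ∈ Z} ≃ Fin j :=
    { toFun := fun s => match s with
        | ⟨.inl a, ha⟩ => absurd ha (x.1 a).2
        | ⟨.inr b, _⟩ => b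
      invFun := fun b => ⟨.inr b, (x.2 b).2⟩
      left_inv := by rintro ⟨(a | b), hs⟩
                     · exact absurd hs (x.1 a).2
                     · rfl
      right_inv := fun b => rfl }
  rw [Nat.card_congr (e1.trans e2), Nat.card_eq_fintype_card, Fintype.card_fin]

/-- The concatenation map `η` into `W`. -/
def η {i j n : ℕ} (h : i + j = n) (x : (Fin i → ↥(Zᶜ)) × (Fin j → ↥Z)) : Wset Z j n :=
  ⟨concat Z h x, concat_mem Z h x⟩

lemma permSmul_one {n : ℕ} (w : Fin n → X) : permSmul 1 w = w := rfl

lemma permSmul_mul {n : ℕ} (σ τ : Perm (Fin n)) (w : Fin n → X) :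
    permSmul (σ * τ) w = permSmul σ (permSmul τ w) := by
  funext k
  simp [permSmul, mul_inv_rev]

def blockEmbHom {i j n : ℕ} (h : i + j = n) : Perm (Fin i) × Perm (Fin j) →* Perm (Fin n) :=
  (finAdd h).permCongrHom.toMonoidHom.comp (Perm.sumCongrHom (Fin i) (Fin j))

lemma coe_blockEmbHom {i j n : ℕ} (h : i + j = n) : ⇑(blockEmbHom h) = blockEmb h := rfl

lemma sourceAct_one {i j : ℕ} (x : (Fin i → ↥(Zᶜ)) × (Fin j → ↥Z)) :
    sourceAct Z 1 x = x := rfl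

lemma sourceAct_mul {i j : ℕ} (p q : Perm (Fin i) × Perm (Fin j))
    (x : (Fin i → ↥(Zᶜ)) × (Fin j → ↥Z)) :
    sourceAct Z (p * q) x = sourceAct Z p (sourceAct Z q x) := by
  simp [sourceAct, mul_inv_rev]

lemma concat_finAdd {i j n : ℕ} (h : i + j = n) (x : (Fin i → ↥(Zᶜ)) × (Fin j → ↥Z))
    (s : Fin i ⊕ Fin j) :
    concat Z h x (finAdd h s) = Sum.elim (fun a => (x.1 a : X)) (fun b => (x.2 b : X)) s := by
  simp [concat]

lemma concat_injective {i j n : ℕ} (h : i + j = n) : Function.Injective (concat Z h) := by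
  intro x y hxy
  have hs := fun s => congrFun hxy (finAdd h s)
  simp only [concat_finAdd] at hs
  exact Prod.ext (funext fun a => Subtype.ext (hs (.inl a)))
    (funext fun b => Subtype.ext (hs (.inr b)))

lemma concat_sourceAct {i j n : ℕ} (h : i + j = n) (p : Perm (Fin i) × Perm (Fin j))
    (x : (Fin i → ↥(Zᶜ)) × (Fin j → ↥Z)) :
    concat Z h (sourceAct Z p x) = permSmul (blockEmb h p) (concat Z h x) := by
  funext k
  obtain ⟨s, rfl⟩ := (finAdd h).surjective k
  rw [permSmul, ← coe_blockEmbHom, ← map_inv, coe_blockEmbHom]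
  cases s <;> simp [blockEmb, concat_finAdd, sourceAct]

lemma finAdd_symm_mem_range_inl_iff {i j n : ℕ} (h : i + j = n)
    (x : (Fin i → ↥(Zᶜ)) × (Fin j → ↥Z)) (k : Fin n) :
    (finAdd h).symm k ∈ Set.range Sum.inl ↔ concat Z h x k ∉ Z := by
  obtain ⟨s, rfl⟩ := (finAdd h).surjective k
  rw [concat_finAdd, Equiv.symm_apply_apply]
  rcases s with a | b
  · simp only [Sum.elim_inl, Set.mem_range, exists_apply_eq_apply, true_iff]
    exact (x.1 a).2
  · simp only [Sum.elim_inr, Set.mem_range, reduceCtorEq, exists_false, false_iff, not_not]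
    exact (x.2 b).2

/-- `ρ` maps coordinates outside `Z` to coordinates outside `Z`, hence preserves the two
blocks. -/
lemma exists_blockEmb_eq_of_permSmul_concat_eq {i j n : ℕ} (h : i + j = n) (ρ : Perm (Fin n))
    {x y : (Fin i → ↥(Zᶜ)) × (Fin j → ↥Z)} (hρ : permSmul ρ (concat Z h x) = concat Z h y) :
    ∃ q, blockEmb h q = ρ := by
  set ρ' : Perm (Fin i ⊕ Fin j) := (finAdd h).symm.permCongr ρ
  have hmaps : Set.MapsTo ρ' (Set.range Sum.inl) (Set.range Sum.inl) := by
    intro s hs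
    have hy : concat Z h y (ρ (finAdd h s)) = concat Z h x (finAdd h s) := by
      rw [← hρ, permSmul, Perm.inv_def, symm_apply_apply]
    rw [← (finAdd h).symm_apply_apply s, finAdd_symm_mem_range_inl_iff Z h x] at hs
    change (finAdd h).symm (ρ (finAdd h s)) ∈ _
    rw [finAdd_symm_mem_range_inl_iff Z h y, hy]
    exact hs
  obtain ⟨q, hq⟩ := Perm.mem_sumCongrHom_range_of_perm_mapsTo_inl hmaps
  refine ⟨q, ?_⟩
  change (finAdd h).permCongr (Perm.sumCongrHom _ _ q) = ρ
  ext k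
  simp [hq, ρ', Equiv.permCongr_apply]

def indConcat {i j n : ℕ} (h : i + j = n) : Ind (blockEmb h) (sourceAct Z) → (Fin n → X) :=
  Quot.lift (fun a => permSmul a.1 (concat Z h a.2)) <| by
    rintro ⟨σ, x⟩ _ ⟨q, rfl⟩
    dsimp only
    rw [concat_sourceAct, ← coe_blockEmbHom, map_inv, ← permSmul_mul, mul_inv_cancel_right]

lemma indConcat_mem {i j n : ℕ} (h : i + j = n) (a : Ind (blockEmb h) (sourceAct Z)) :
    indConcat Z h a ∈ Wset Z j n := by
  induction a using Quot.ind with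
  | mk a => exact (WAct Z a.1 (η Z h a.2)).2

lemma indConcat_injective {i j n : ℕ} (h : i + j = n) : Function.Injective (indConcat Z h) := by
  rintro ⟨σ, x⟩ ⟨τ, y⟩ hxy
  change permSmul σ (concat Z h x) = permSmul τ (concat Z h y) at hxy
  have hρ : permSmul (τ⁻¹ * σ) (concat Z h x) = concat Z h y := by
    rw [permSmul_mul, hxy, ← permSmul_mul, inv_mul_cancel, permSmul_one]
  obtain ⟨q, hq⟩ := exists_blockEmb_eq_of_permSmul_concat_eq Z h _ hρ
  have hy : y = sourceAct Z q x :=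
    concat_injective Z h (by rw [concat_sourceAct, hq, hρ])
  refine (Quot.sound ⟨q, ?_⟩).symm
  rw [hq, mul_inv_cancel_left, hy, ← sourceAct_mul, inv_mul_cancel, sourceAct_one]

lemma exists_permSmul_concat_eq {n : ℕ} (w : Fin n → X) :
    ∃ (i j : ℕ) (h : i + j = n) (σ : Perm (Fin n)) (x : (Fin i → ↥(Zᶜ)) × (Fin j → ↥Z)),
      permSmul σ (concat Z h x) = w := by
  classical
  let E : {k // w k ∉ Z} ⊕ {k // w k ∈ Z} ≃ Fin n :=
    (Equiv.sumComm _ _).trans (Equiv.sumCompl fun k => w k ∈ Z)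
  have h : Nat.card {k // w k ∉ Z} + Nat.card {k // w k ∈ Z} = n := by
    rw [← Nat.card_sum, Nat.card_congr E, Nat.card_fin]
  let eI := (Finite.equivFin {k // w k ∉ Z}).symm
  let eJ := (Finite.equivFin {k // w k ∈ Z}).symm
  refine ⟨_, _, h, (finAdd h).symm.trans ((Equiv.sumCongr eI eJ).trans E),
    (fun a => ⟨w (eI a), (eI a).2⟩, fun b => ⟨w (eJ b), (eJ b).2⟩), ?_⟩
  funext k
  obtain ⟨s, rfl⟩ := ((Equiv.sumCongr eI eJ).trans E).surjective k
  rcases s with a | b <;> simp [permSmul, Perm.inv_def, concat_finAdd, E]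

/-- The `Σn`-set `Fin n → X` decomposes equivariantly as the disjoint union, over
pairs `(i, j)` with `i + j = n`, of the induced `Σn`-sets
`Ind_{Σi×Σj}^{Σn}((Fin i → X \\ Z) × (Fin j → Z))`; the bijection sends the class of
`(σ, (u, v))` in the `(i, j)`-summand to `σ • (concatenation of u and v)`. -/
theorem statement1 (n : ℕ) :
    ∃ e : ((p : {p : ℕ × ℕ // p.1 + p.2 = n}) ×
        Ind (blockEmb p.2) (sourceAct (i := p.1.1) (j := p.1.2) Z)) ≃ (Fin n → X),
      (∀ (σ : Perm (Fin n)) (x), e ⟨x.1, Ind.smul σ x.2⟩ = permSmul σ (e x)) ∧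
      (∀ (p : {p : ℕ × ℕ // p.1 + p.2 = n}) (σ : Perm (Fin n))
          (u : Fin p.1.1 → ↥(Zᶜ)) (v : Fin p.1.2 → ↥Z),
        e ⟨p, Ind.mk (blockEmb p.2) (sourceAct Z) (σ, (u, v))⟩ =
          permSmul σ (concat Z p.2 (u, v))) := by
  let F : ((p : {p : ℕ × ℕ // p.1 + p.2 = n}) ×
      Ind (blockEmb p.2) (sourceAct (i := p.1.1) (j := p.1.2) Z)) → (Fin n → X) :=
    fun a => indConcat Z a.1.2 a.2
  have hinj : Function.Injective F := by
    rintro ⟨⟨⟨i, j⟩, h⟩, a⟩ ⟨⟨⟨i', j'⟩, h'⟩, b⟩ hab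
    change indConcat Z h a = indConcat Z h' b at hab
    have hj : j = j' := (indConcat_mem Z h a).symm.trans (hab ▸ indConcat_mem Z h' b)
    obtain rfl : i = i' := by omega
    subst hj
    exact congrArg (Sigma.mk _) (indConcat_injective Z h hab)
  have hsurj : Function.Surjective F := by
    intro w
    obtain ⟨i, j, h, σ, x, hw⟩ := exists_permSmul_concat_eq Z w
    exact ⟨⟨⟨(i, j), h⟩, Ind.mk _ _ (σ, x)⟩, hw⟩
  refine ⟨Equiv.ofBijective F ⟨hinj, hsurj⟩, ?_, fun _ _ _ _ => rfl⟩
  rintro σ ⟨p, a⟩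
  induction a using Quot.ind with
  | mk a => exact permSmul_mul σ a.1 (concat Z p.2 a.2)

end Stmt1
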